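/- Let X be an n×d real matrix with 𝕏 = XᵀX, and let M₂ be a non-singular positive semi-definite n×n diagonal matrix with diagonal entries p₁, …, p_n > 0, and 𝕏̂ = XᵀM₂X. Then the effective inverse condition numbers satisfy σ⁺min(𝕏̂)/‖𝕏̂‖ ≤ (max_{i=1,…,n} p_i / min_{i=1,…,n} p_i) · σ⁺min(𝕏)/‖𝕏‖, where σ⁺min denotes the smallest non-zero singular value and ‖·‖ the spectral norm. -/

import Mathlib

/-!
Both `𝕏 = XᵀX` and `𝕏̂ = XᵀM₂X` are positive semidefinite, and since `vᵀ𝕏̂v = ∑ pⱼ (Xv)ⱼ²`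
their quadratic forms satisfy `p_min · vᵀ𝕏v ≤ vᵀ𝕏̂v ≤ p_max · vᵀ𝕏v`. For a positive semidefinite
matrix the singular values are the eigenvalues, and the spectral norm is the supremum of the
Rayleigh quotient, so `p_min ‖𝕏‖ ≤ ‖𝕏̂‖`. For the smallest positive eigenvalue, an eigenvector `v`
of `𝕏` with eigenvalue `μ > 0` lies in the range of `𝕏`, which is orthogonal to `ker 𝕏̂ = ker 𝕏`;
expanding `v` in an eigenbasis of `𝕏̂` gives `σ⁺min(𝕏̂) |v|² ≤ vᵀ𝕏̂v ≤ p_max μ |v|²`.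
-/

open Matrix MeasureTheory ProbabilityTheory Filter
open scoped BigOperators

noncomputable section

/-- Euclidean norm of a vector in `Fin n → ℝ`. -/
def l2norm {n : ℕ} (v : Fin n → ℝ) : ℝ := Real.sqrt (∑ i, (v i) ^ 2)

/-- Spectral norm (ℓ²-operator norm) of a real matrix. -/
def specNorm {m n : ℕ} (A : Matrix (Fin m) (Fin n) ℝ) : ℝ :=
  sSup {c : ℝ | ∃ v : Fin n → ℝ, l2norm v = 1 ∧ c = l2norm (A *ᵥ v)}

/-- The smallest non-zero singular value of a real matrix:
the infimum of all positive `s` such that `s ^ 2` is an eigenvalue of `AᵀA`. -/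
def sigmaMinPos {m n : ℕ} (A : Matrix (Fin m) (Fin n) ℝ) : ℝ :=
  sInf {s : ℝ | 0 < s ∧ ∃ v : Fin n → ℝ, v ≠ 0 ∧ (Aᵀ * A) *ᵥ v = (s ^ 2) • v}

/-- `B` is the Moore–Penrose pseudo-inverse of `A` (the four Penrose conditions). -/
def IsMoorePenrose {m n : ℕ} (A : Matrix (Fin m) (Fin n) ℝ)
    (B : Matrix (Fin n) (Fin m) ℝ) : Prop :=
  A * B * A = A ∧ B * A * B = B ∧ (A * B)ᵀ = A * B ∧ (B * A)ᵀ = B * A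

/-- `w` lies in the orthogonal complement of `ker A`. -/
def perpKer {m n : ℕ} (A : Matrix (Fin m) (Fin n) ℝ) (w : Fin n → ℝ) : Prop :=
  ∀ v : Fin n → ℝ, A *ᵥ v = 0 → w ⬝ᵥ v = 0

/-- Entrywise expectation of a random matrix. -/
def matExp {Ω : Type*} [MeasurableSpace Ω] (μ : Measure Ω) {m n : ℕ}
    (M : Ω → Matrix (Fin m) (Fin n) ℝ) : Matrix (Fin m) (Fin n) ℝ :=
  Matrix.of fun i j => ∫ ω, M ω i j ∂μ

/-- Entrywise expectation of a random vector. -/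
def vecExp {Ω : Type*} [MeasurableSpace Ω] (μ : Measure Ω) {n : ℕ}
    (v : Ω → Fin n → ℝ) : Fin n → ℝ :=
  fun i => ∫ ω, v ω i ∂μ

open scoped Matrix.Norms.L2Operator

lemma l2norm_eq_norm {n : ℕ} (v : Fin n → ℝ) : l2norm v = ‖WithLp.toLp 2 v‖ := by
  simp [l2norm, EuclideanSpace.norm_eq]

theorem specNorm_eq_l2_opNorm {m n : ℕ} (A : Matrix (Fin m) (Fin n) ℝ) : specNorm A = ‖A‖ := by
  rw [l2_opNorm_def, ← ContinuousLinearMap.sSup_sphere_eq_norm, specNorm]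
  congr 1
  ext c
  constructor
  · rintro ⟨v, hv, rfl⟩
    exact ⟨WithLp.toLp 2 v, by simpa [l2norm_eq_norm] using hv, by rw [l2norm_eq_norm]; rfl⟩
  · rintro ⟨x, hx, rfl⟩
    exact ⟨x.ofLp, by simpa [l2norm_eq_norm] using hx, by rw [l2norm_eq_norm]; rfl⟩

lemma OrthonormalBasis.dotProduct_eq_sum {ι : Type*} [Fintype ι]
    (b : OrthonormalBasis ι ℝ (EuclideanSpace ℝ ι)) (v w : ι → ℝ) :
    v ⬝ᵥ w = ∑ i, ((b i).ofLp ⬝ᵥ v) * ((b i).ofLp ⬝ᵥ w) := by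
  simpa [EuclideanSpace.inner_eq_star_dotProduct, dotProduct_comm]
    using (b.sum_inner_mul_inner (WithLp.toLp 2 v) (WithLp.toLp 2 w)).symm

def posEigenvalues {d : ℕ} (M : Matrix (Fin d) (Fin d) ℝ) : Set ℝ :=
  {s | 0 < s ∧ ∃ v : Fin d → ℝ, v ≠ 0 ∧ M *ᵥ v = s • v}

namespace Matrix

variable {d : ℕ} {M : Matrix (Fin d) (Fin d) ℝ}

lemma rayleighQuotient_toEuclideanCLM (A : Matrix (Fin d) (Fin d) ℝ)
    (x : EuclideanSpace ℝ (Fin d)) :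
    (toEuclideanCLM (𝕜 := ℝ) (n := Fin d) A).rayleighQuotient x
      = (x.ofLp ⬝ᵥ A *ᵥ x.ofLp) / ‖x‖ ^ 2 := by
  simp [ContinuousLinearMap.rayleighQuotient, ContinuousLinearMap.reApplyInnerSelf_apply,
    real_inner_comm, inner_toEuclideanCLM]

theorem PosSemidef.mul_l2_opNorm_le_of_dotProduct_mulVec_le {A B : Matrix (Fin d) (Fin d) ℝ}
    (hA : A.PosSemidef) {c : ℝ} (hc : 0 ≤ c)
    (h : ∀ v, c * (v ⬝ᵥ A *ᵥ v) ≤ v ⬝ᵥ B *ᵥ v) : c * ‖A‖ ≤ ‖B‖ := by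
  rw [← l2_opNorm_toEuclideanCLM A, ContinuousLinearMap.norm_eq_iSup_rayleighQuotient _
    (isSymmetric_toEuclideanLin_iff.mpr hA.1), Real.mul_iSup_of_nonneg hc]
  refine ciSup_le fun x => ?_
  have hRA : 0 ≤ (x.ofLp ⬝ᵥ A *ᵥ x.ofLp) / ‖x‖ ^ 2 :=
    div_nonneg (by simpa using hA.dotProduct_mulVec_nonneg x.ofLp) (sq_nonneg _)
  calc c * |(toEuclideanCLM (𝕜 := ℝ) (n := Fin d) A).rayleighQuotient x|
      ≤ (toEuclideanCLM (𝕜 := ℝ) (n := Fin d) B).rayleighQuotient x := by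
        rw [rayleighQuotient_toEuclideanCLM, rayleighQuotient_toEuclideanCLM, abs_of_nonneg hRA,
          ← mul_div_assoc]
        exact div_le_div_of_nonneg_right (h _) (sq_nonneg _)
    _ ≤ ‖B‖ := (le_abs_self _).trans (ContinuousLinearMap.rayleighQuotient_le_norm _ x)

lemma IsHermitian.transpose_eq (hM : M.IsHermitian) : Mᵀ = M := by
  rw [← conjTranspose_eq_transpose_of_trivial, hM.eq]

lemma IsHermitian.eigenvectorBasis_dotProduct_mulVec (hM : M.IsHermitian) (i : Fin d)
    (v : Fin d → ℝ) :
    (hM.eigenvectorBasis i).ofLp ⬝ᵥ M *ᵥ v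
      = hM.eigenvalues i * ((hM.eigenvectorBasis i).ofLp ⬝ᵥ v) := by
  rw [dotProduct_mulVec, ← mulVec_transpose, hM.transpose_eq, hM.mulVec_eigenvectorBasis,
    smul_dotProduct, smul_eq_mul]

lemma IsHermitian.dotProduct_mulVec_eq_sum (hM : M.IsHermitian) (v : Fin d → ℝ) :
    v ⬝ᵥ M *ᵥ v = ∑ i, hM.eigenvalues i * ((hM.eigenvectorBasis i).ofLp ⬝ᵥ v) ^ 2 := by
  simp only [hM.eigenvectorBasis.dotProduct_eq_sum v, hM.eigenvectorBasis_dotProduct_mulVec]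
  exact Finset.sum_congr rfl fun i _ => by ring

lemma PosSemidef.mulVec_eq_zero_of_dotProduct_mulVec_eq_zero (hM : M.PosSemidef)
    {v : Fin d → ℝ} (h : v ⬝ᵥ M *ᵥ v = 0) : M *ᵥ v = 0 := by
  have hterm : ∀ i, hM.1.eigenvalues i * ((hM.1.eigenvectorBasis i).ofLp ⬝ᵥ v) ^ 2 = 0 := by
    rw [hM.1.dotProduct_mulVec_eq_sum] at h
    simpa using (Finset.sum_eq_zero_iff_of_nonneg fun i _ =>
      mul_nonneg (hM.eigenvalues_nonneg i) (sq_nonneg _)).mp h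
  refine dotProduct_self_eq_zero.mp ?_
  rw [hM.1.eigenvectorBasis.dotProduct_eq_sum]
  refine Finset.sum_eq_zero fun i _ => ?_
  rw [hM.1.eigenvectorBasis_dotProduct_mulVec]
  linear_combination hM.1.eigenvalues i * hterm i

lemma PosSemidef.sInf_posEigenvalues_mul_le (hM : M.PosSemidef) {v : Fin d → ℝ}
    (hv : perpKer M v) : sInf (posEigenvalues M) * (v ⬝ᵥ v) ≤ v ⬝ᵥ M *ᵥ v := by
  rw [hM.1.dotProduct_mulVec_eq_sum, hM.1.eigenvectorBasis.dotProduct_eq_sum, Finset.mul_sum]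
  refine Finset.sum_le_sum fun i _ => ?_
  rw [← sq]
  rcases (hM.eigenvalues_nonneg i).eq_or_lt with hzero | hpos
  · have hbv : (hM.1.eigenvectorBasis i).ofLp ⬝ᵥ v = 0 := (dotProduct_comm _ _).trans <|
      hv _ (by rw [hM.1.mulVec_eigenvectorBasis, ← hzero, zero_smul])
    simp [hbv]
  · have hmem : hM.1.eigenvalues i ∈ posEigenvalues M :=
      ⟨hpos, _, (WithLp.ofLp_eq_zero 2).ne.2 (hM.1.eigenvectorBasis.orthonormal.ne_zero i),
        hM.1.mulVec_eigenvectorBasis i⟩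
    exact mul_le_mul_of_nonneg_right (csInf_le ⟨0, fun s hs => hs.1.le⟩ hmem) (sq_nonneg _)

lemma PosSemidef.sigmaMinPos_eq_sInf_posEigenvalues (hM : M.PosSemidef) :
    sigmaMinPos M = sInf (posEigenvalues M) := by
  rw [sigmaMinPos, hM.1.transpose_eq]
  congr 1
  ext s
  refine and_congr_right fun hs => ⟨?_, ?_⟩
  · rintro ⟨v, hv, hMMv⟩
    -- `M² - s² = (M - s) (M + s)`, and `M + s` is injective because `M ≥ 0` and `s > 0`.
    refine ⟨M *ᵥ v + s • v, fun h0 => hv ?_, ?_⟩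
    · have hsum : v ⬝ᵥ M *ᵥ v + s * (v ⬝ᵥ v) = 0 := by
        rw [← smul_eq_mul, ← dotProduct_smul, ← dotProduct_add, h0, dotProduct_zero]
      have hMv : 0 ≤ v ⬝ᵥ M *ᵥ v := by simpa using hM.dotProduct_mulVec_nonneg v
      have hvv : 0 ≤ v ⬝ᵥ v := by simpa using dotProduct_self_star_nonneg v
      exact dotProduct_self_eq_zero.mp (by nlinarith)
    · rw [mulVec_add, mulVec_smul, mulVec_mulVec, hMMv, smul_add, smul_smul, sq, add_comm]
  · rintro ⟨v, hv, hMv⟩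
    exact ⟨v, hv, by rw [← mulVec_mulVec, hMv, mulVec_smul, hMv, smul_smul, sq]⟩

lemma PosSemidef.posEigenvalues_nonempty (hM : M.PosSemidef) (h : M ≠ 0) :
    (posEigenvalues M).Nonempty := by
  obtain ⟨v, t, ht, hv, hMv⟩ := hM.1.exists_eigenvector_of_ne_zero h
  have hquad : 0 ≤ t * (v ⬝ᵥ v) := by
    simpa [hMv] using hM.dotProduct_mulVec_nonneg v
  have hvv : 0 < v ⬝ᵥ v := by
    simpa using dotProduct_star_self_pos_iff.mpr hv
  exact ⟨t, (nonneg_of_mul_nonneg_left hquad hvv).lt_of_ne' ht, v, hv, hMv⟩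

theorem PosSemidef.sInf_posEigenvalues_le_mul {A B : Matrix (Fin d) (Fin d) ℝ}
    (hA : A.PosSemidef) (hB : B.PosSemidef) (hA0 : A ≠ 0)
    (hker : ∀ w, B *ᵥ w = 0 → A *ᵥ w = 0) {c : ℝ} (hc : 0 < c)
    (h : ∀ v, v ⬝ᵥ B *ᵥ v ≤ c * (v ⬝ᵥ A *ᵥ v)) :
    sInf (posEigenvalues B) ≤ c * sInf (posEigenvalues A) := by
  rw [← div_le_iff₀' hc]
  refine le_csInf (hA.posEigenvalues_nonempty hA0) ?_
  rintro s ⟨hs, v, hv, hAv⟩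
  -- `v = s⁻¹ • A v` lies in the range of `A`, which is orthogonal to `ker A ⊇ ker B`.
  have hperp : perpKer B v := fun w hw => by
    have hsw : s * (v ⬝ᵥ w) = 0 := by
      rw [← smul_eq_mul, ← smul_dotProduct, ← hAv, dotProduct_comm, dotProduct_mulVec,
        ← mulVec_transpose, hA.1.transpose_eq, hker w hw, zero_dotProduct]
    exact (mul_eq_zero.mp hsw).resolve_left hs.ne'
  have hvv : 0 < v ⬝ᵥ v := by simpa using dotProduct_star_self_pos_iff.mpr hv
  have hchain : sInf (posEigenvalues B) * (v ⬝ᵥ v) ≤ c * s * (v ⬝ᵥ v) :=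
    calc sInf (posEigenvalues B) * (v ⬝ᵥ v) ≤ v ⬝ᵥ B *ᵥ v := hB.sInf_posEigenvalues_mul_le hperp
      _ ≤ c * (v ⬝ᵥ A *ᵥ v) := h v
      _ = c * s * (v ⬝ᵥ v) := by rw [hAv, dotProduct_smul, smul_eq_mul, mul_assoc]
  rw [div_le_iff₀' hc]
  exact le_of_mul_le_mul_right hchain hvv

end Matrix

theorem sigmaMinPos_div_specNorm_le_of_dotProduct_mulVec_bounds {d : ℕ}
    {A B : Matrix (Fin d) (Fin d) ℝ} (hA : A.PosSemidef) (hB : B.PosSemidef) {a b : ℝ}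
    (ha : 0 < a) (hb : 0 < b) (hlow : ∀ v, a * (v ⬝ᵥ A *ᵥ v) ≤ v ⬝ᵥ B *ᵥ v)
    (hup : ∀ v, v ⬝ᵥ B *ᵥ v ≤ b * (v ⬝ᵥ A *ᵥ v)) :
    sigmaMinPos B / specNorm B ≤ b / a * (sigmaMinPos A / specNorm A) := by
  rw [hA.sigmaMinPos_eq_sInf_posEigenvalues, hB.sigmaMinPos_eq_sInf_posEigenvalues,
    specNorm_eq_l2_opNorm, specNorm_eq_l2_opNorm]
  have hnorm : a * ‖A‖ ≤ ‖B‖ := hA.mul_l2_opNorm_le_of_dotProduct_mulVec_le ha.le hlow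
  rcases (norm_nonneg A).eq_or_lt with hA0 | hApos
  · have hnormB : b⁻¹ * ‖B‖ ≤ ‖A‖ := hB.mul_l2_opNorm_le_of_dotProduct_mulVec_le
      (inv_nonneg.mpr hb.le) fun v => (inv_mul_le_iff₀ hb).mpr (hup v)
    have hB0 : ‖B‖ = 0 := by
      rw [← hA0, inv_mul_le_iff₀ hb, mul_zero] at hnormB
      exact le_antisymm hnormB (norm_nonneg B)
    simp [hB0, ← hA0]
  · have hker : ∀ w, B *ᵥ w = 0 → A *ᵥ w = 0 := fun w hw => by
      refine hA.mulVec_eq_zero_of_dotProduct_mulVec_eq_zero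
        (le_antisymm ?_ (by simpa using hA.dotProduct_mulVec_nonneg w))
      have hlow_w := hlow w
      rw [hw, dotProduct_zero] at hlow_w
      exact nonpos_of_mul_nonpos_right hlow_w ha
    have hσA : 0 ≤ sInf (posEigenvalues A) := Real.sInf_nonneg fun s hs => hs.1.le
    have hσ := hA.sInf_posEigenvalues_le_mul hB (norm_pos_iff.mp hApos) hker hb hup
    calc sInf (posEigenvalues B) / ‖B‖
        ≤ b * sInf (posEigenvalues A) / (a * ‖A‖) :=
          div_le_div₀ (mul_nonneg hb.le hσA) hσ (mul_pos ha hApos) hnorm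
      _ = b / a * (sInf (posEigenvalues A) / ‖A‖) := by rw [div_mul_div_comm]

namespace Matrix

variable {n d : ℕ}

lemma dotProduct_mulVec_transpose_mul_diagonal_mul (X : Matrix (Fin n) (Fin d) ℝ)
    (q : Fin n → ℝ) (v : Fin d → ℝ) :
    v ⬝ᵥ (Xᵀ * diagonal q * X) *ᵥ v = ∑ j, q j * (X *ᵥ v) j ^ 2 := by
  rw [← mulVec_mulVec, ← mulVec_mulVec, dotProduct_mulVec, vecMul_transpose]
  simp only [dotProduct, mulVec_diagonal]
  exact Finset.sum_congr rfl fun j _ => by ring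

lemma dotProduct_mulVec_transpose_mul_self (X : Matrix (Fin n) (Fin d) ℝ) (v : Fin d → ℝ) :
    v ⬝ᵥ (Xᵀ * X) *ᵥ v = ∑ j, (X *ᵥ v) j ^ 2 := by
  simpa using dotProduct_mulVec_transpose_mul_diagonal_mul X 1 v

lemma posSemidef_transpose_mul_diagonal_mul (X : Matrix (Fin n) (Fin d) ℝ) {q : Fin n → ℝ}
    (hq : 0 ≤ q) : (Xᵀ * diagonal q * X).PosSemidef := by
  simpa using (PosSemidef.diagonal hq).conjTranspose_mul_mul_same X

lemma posSemidef_transpose_mul_self (X : Matrix (Fin n) (Fin d) ℝ) : (Xᵀ * X).PosSemidef := by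
  simpa using posSemidef_conjTranspose_mul_self X

end Matrix

/-- effective condition number under weighting.
For a diagonal weighting `M₂ = diag(p₁,…,p_n)` with `p_i > 0`,
`σ⁺min(𝕏̂)/‖𝕏̂‖ ≤ (max_i p_i / min_i p_i) · σ⁺min(𝕏)/‖𝕏‖`,
where `𝕏 = XᵀX` and `𝕏̂ = XᵀM₂X`. -/
theorem randomly_weighted_gd_stmt18 {n d : ℕ} (hn : 0 < n)
    (X : Matrix (Fin n) (Fin d) ℝ)
    (p : Fin n → ℝ) (hp : ∀ i, 0 < p i) :
    sigmaMinPos (Xᵀ * Matrix.diagonal p * X) / specNorm (Xᵀ * Matrix.diagonal p * X)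
      ≤ ((Finset.univ : Finset (Fin n)).sup' ⟨⟨0, hn⟩, Finset.mem_univ _⟩ p
            / (Finset.univ : Finset (Fin n)).inf' ⟨⟨0, hn⟩, Finset.mem_univ _⟩ p)
          * (sigmaMinPos (Xᵀ * X) / specNorm (Xᵀ * X)) := by
  have hpmin : 0 < Finset.univ.inf' ⟨⟨0, hn⟩, Finset.mem_univ _⟩ p :=
    (Finset.lt_inf'_iff _).mpr fun i _ => hp i
  have hpmax : 0 < Finset.univ.sup' ⟨⟨0, hn⟩, Finset.mem_univ _⟩ p :=
    (Finset.lt_sup'_iff _).mpr ⟨⟨0, hn⟩, Finset.mem_univ _, hp _⟩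
  refine sigmaMinPos_div_specNorm_le_of_dotProduct_mulVec_bounds
    (posSemidef_transpose_mul_self X)
    (posSemidef_transpose_mul_diagonal_mul X fun i => (hp i).le) hpmin hpmax
    (fun v => ?_) (fun v => ?_)
  · rw [dotProduct_mulVec_transpose_mul_self, dotProduct_mulVec_transpose_mul_diagonal_mul,
      Finset.mul_sum]
    exact Finset.sum_le_sum fun j _ =>
      mul_le_mul_of_nonneg_right (Finset.inf'_le _ (Finset.mem_univ j)) (sq_nonneg _)
  · rw [dotProduct_mulVec_transpose_mul_self, dotProduct_mulVec_transpose_mul_diagonal_mul,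
      Finset.mul_sum]
    exact Finset.sum_le_sum fun j _ =>
      mul_le_mul_of_nonneg_right (Finset.le_sup' _ (Finset.mem_univ j)) (sq_nonneg _)
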